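/- (Localized informational robustness) For every finite economic environment and informational restriction Δ (with each Δ_{i,θ_i} nonempty), every player i, and every payoff type θ_i: ΔR_i^∞(θ_i) = ∪_{Y ∈ 𝕐(Δ)} ∪_{y_i ∈ Y_i} ICR_i^{∞,Y}(θ_i, y_i), where 𝕐(Δ) is the collection of all finite information structures Y with marg_{Θ_0 × Θ_{-i}} π_i(θ_i, y_i) ∈ Δ_{i,θ_i} for all players i and all information types (θ_i, y_i). -/
import Mathlib


open Finset

section Defs

variable {Θ0 Θ1 Θ2 A1 A2 Y1 Y2 : Type}
variable [Fintype Θ0] [Fintype Θ1] [Fintype Θ2] [Fintype A1] [Fintype A2]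
variable [Fintype Y1] [Fintype Y2]

/-- A probability distribution on a finite type, encoded as a nonnegative
function summing to one. -/
def IsProb {X : Type} [Fintype X] (μ : X → ℝ) : Prop :=
  (∀ x, 0 ≤ μ x) ∧ ∑ x, μ x = 1

/-- Expected utility of player 1 of action `a1` with payoff type `θ1` under
conjecture `μ` on `Θ0 × Θ2 × A2`. -/
def EU1 (u1 : A1 → A2 → Θ0 → Θ1 → Θ2 → ℝ) (μ : Θ0 × Θ2 × A2 → ℝ)
    (a1 : A1) (θ1 : Θ1) : ℝ :=
  ∑ x : Θ0 × Θ2 × A2, μ x * u1 a1 x.2.2 x.1 θ1 x.2.1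

def EU2 (u2 : A1 → A2 → Θ0 → Θ1 → Θ2 → ℝ) (μ : Θ0 × Θ1 × A1 → ℝ)
    (a2 : A2) (θ2 : Θ2) : ℝ :=
  ∑ x : Θ0 × Θ1 × A1, μ x * u2 x.2.2 a2 x.1 x.2.1 θ2

/-- Best replies of player 1 against conjecture `μ` for payoff type `θ1`. -/
def BR1 (u1 : A1 → A2 → Θ0 → Θ1 → Θ2 → ℝ) (μ : Θ0 × Θ2 × A2 → ℝ) (θ1 : Θ1) : Set A1 :=
  {a1 | ∀ b1, EU1 u1 μ b1 θ1 ≤ EU1 u1 μ a1 θ1}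

def BR2 (u2 : A1 → A2 → Θ0 → Θ1 → Θ2 → ℝ) (μ : Θ0 × Θ1 × A1 → ℝ) (θ2 : Θ2) : Set A2 :=
  {a2 | ∀ b2, EU2 u2 μ b2 θ2 ≤ EU2 u2 μ a2 θ2}

/-- One elimination step of belief-free rationalizability for player 1, given the
opponent's surviving correspondence `F2`. -/
def step1 (u1 : A1 → A2 → Θ0 → Θ1 → Θ2 → ℝ) (F2 : Θ2 → Set A2) (θ1 : Θ1) : Set A1 :=
  {a1 | ∃ μ : Θ0 × Θ2 × A2 → ℝ, IsProb μ ∧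
    (∀ x, μ x ≠ 0 → x.2.2 ∈ F2 x.2.1) ∧ a1 ∈ BR1 u1 μ θ1}

def step2 (u2 : A1 → A2 → Θ0 → Θ1 → Θ2 → ℝ) (F1 : Θ1 → Set A1) (θ2 : Θ2) : Set A2 :=
  {a2 | ∃ μ : Θ0 × Θ1 × A1 → ℝ, IsProb μ ∧
    (∀ x, μ x ≠ 0 → x.2.2 ∈ F1 x.2.1) ∧ a2 ∈ BR2 u2 μ θ2}

/-- The iterative belief-free rationalizability procedure (both players). -/
def BFR (u1 u2 : A1 → A2 → Θ0 → Θ1 → Θ2 → ℝ) :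
    ℕ → (Θ1 → Set A1) × (Θ2 → Set A2)
  | 0 => (fun _ => Set.univ, fun _ => Set.univ)
  | n + 1 =>
      (fun θ1 => (BFR u1 u2 n).1 θ1 ∩ step1 u1 (BFR u1 u2 n).2 θ1,
       fun θ2 => (BFR u1 u2 n).2 θ2 ∩ step2 u2 (BFR u1 u2 n).1 θ2)

def BFRinf1 (u1 u2 : A1 → A2 → Θ0 → Θ1 → Θ2 → ℝ) (θ1 : Θ1) : Set A1 :=
  ⋂ n, (BFR u1 u2 n).1 θ1

def BFRinf2 (u1 u2 : A1 → A2 → Θ0 → Θ1 → Θ2 → ℝ) (θ2 : Θ2) : Set A2 :=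
  ⋂ n, (BFR u1 u2 n).2 θ2

/-- Marginal on `Θ0 × Θ2 × A2` of a belief on `Θ0 × Θ2 × Y2 × A2`. -/
def margA1 (μ : Θ0 × Θ2 × Y2 × A2 → ℝ) : Θ0 × Θ2 × A2 → ℝ :=
  fun x => ∑ y2 : Y2, μ (x.1, x.2.1, y2, x.2.2)

/-- Marginal on `Θ0 × Θ2 × Y2` of a belief on `Θ0 × Θ2 × Y2 × A2`. -/
def margY1 (μ : Θ0 × Θ2 × Y2 × A2 → ℝ) : Θ0 × Θ2 × Y2 → ℝ :=
  fun x => ∑ a2 : A2, μ (x.1, x.2.1, x.2.2, a2)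

def margA2 (μ : Θ0 × Θ1 × Y1 × A1 → ℝ) : Θ0 × Θ1 × A1 → ℝ :=
  fun x => ∑ y1 : Y1, μ (x.1, x.2.1, y1, x.2.2)

def margY2 (μ : Θ0 × Θ1 × Y1 × A1 → ℝ) : Θ0 × Θ1 × Y1 → ℝ :=
  fun x => ∑ a1 : A1, μ (x.1, x.2.1, x.2.2, a1)

/-- One elimination step of interim correlated rationalizability for player 1. -/
def istep1 (u1 : A1 → A2 → Θ0 → Θ1 → Θ2 → ℝ)
    (π1 : Θ1 → Y1 → (Θ0 × Θ2 × Y2 → ℝ)) (F2 : Θ2 → Y2 → Set A2)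
    (θ1 : Θ1) (y1 : Y1) : Set A1 :=
  {a1 | ∃ μ : Θ0 × Θ2 × Y2 × A2 → ℝ, IsProb μ ∧
    (∀ x, μ x ≠ 0 → x.2.2.2 ∈ F2 x.2.1 x.2.2.1) ∧
    margY1 μ = π1 θ1 y1 ∧ a1 ∈ BR1 u1 (margA1 μ) θ1}

def istep2 (u2 : A1 → A2 → Θ0 → Θ1 → Θ2 → ℝ)
    (π2 : Θ2 → Y2 → (Θ0 × Θ1 × Y1 → ℝ)) (F1 : Θ1 → Y1 → Set A1)
    (θ2 : Θ2) (y2 : Y2) : Set A2 :=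
  {a2 | ∃ μ : Θ0 × Θ1 × Y1 × A1 → ℝ, IsProb μ ∧
    (∀ x, μ x ≠ 0 → x.2.2.2 ∈ F1 x.2.1 x.2.2.1) ∧
    margY2 μ = π2 θ2 y2 ∧ a2 ∈ BR2 u2 (margA2 μ) θ2}

/-- The iterative interim correlated rationalizability procedure in the Bayesian
game with information structure `(Y1, Y2, π1, π2)`. -/
def ICR (u1 u2 : A1 → A2 → Θ0 → Θ1 → Θ2 → ℝ)
    (π1 : Θ1 → Y1 → (Θ0 × Θ2 × Y2 → ℝ)) (π2 : Θ2 → Y2 → (Θ0 × Θ1 × Y1 → ℝ)) :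
    ℕ → (Θ1 → Y1 → Set A1) × (Θ2 → Y2 → Set A2)
  | 0 => (fun _ _ => Set.univ, fun _ _ => Set.univ)
  | n + 1 =>
      (fun θ1 y1 => (ICR u1 u2 π1 π2 n).1 θ1 y1 ∩
          istep1 u1 π1 (ICR u1 u2 π1 π2 n).2 θ1 y1,
       fun θ2 y2 => (ICR u1 u2 π1 π2 n).2 θ2 y2 ∩
          istep2 u2 π2 (ICR u1 u2 π1 π2 n).1 θ2 y2)

def ICRinf1 (u1 u2 : A1 → A2 → Θ0 → Θ1 → Θ2 → ℝ)
    (π1 : Θ1 → Y1 → (Θ0 × Θ2 × Y2 → ℝ)) (π2 : Θ2 → Y2 → (Θ0 × Θ1 × Y1 → ℝ))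
    (θ1 : Θ1) (y1 : Y1) : Set A1 :=
  ⋂ n, (ICR u1 u2 π1 π2 n).1 θ1 y1

def ICRinf2 (u1 u2 : A1 → A2 → Θ0 → Θ1 → Θ2 → ℝ)
    (π1 : Θ1 → Y1 → (Θ0 × Θ2 × Y2 → ℝ)) (π2 : Θ2 → Y2 → (Θ0 × Θ1 × Y1 → ℝ))
    (θ2 : Θ2) (y2 : Y2) : Set A2 :=
  ⋂ n, (ICR u1 u2 π1 π2 n).2 θ2 y2

/-- Distribution over `(θ0, θ_{-i}, a_{-i})` induced by `π1(θ1,y1)` and the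
opponent's strategy `s2`. -/
def push1 [DecidableEq A2] (π1 : Θ1 → Y1 → (Θ0 × Θ2 × Y2 → ℝ))
    (s2 : Θ2 → Y2 → A2) (θ1 : Θ1) (y1 : Y1) : Θ0 × Θ2 × A2 → ℝ :=
  fun x => ∑ y2 : Y2, if s2 x.2.1 y2 = x.2.2 then π1 θ1 y1 (x.1, x.2.1, y2) else 0

def push2 [DecidableEq A1] (π2 : Θ2 → Y2 → (Θ0 × Θ1 × Y1 → ℝ))
    (s1 : Θ1 → Y1 → A1) (θ2 : Θ2) (y2 : Y2) : Θ0 × Θ1 × A1 → ℝ :=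
  fun x => ∑ y1 : Y1, if s1 x.2.1 y1 = x.2.2 then π2 θ2 y2 (x.1, x.2.1, y1) else 0

/-- Bayes-Nash equilibrium of the Bayesian game. -/
def IsBNE [DecidableEq A1] [DecidableEq A2]
    (u1 u2 : A1 → A2 → Θ0 → Θ1 → Θ2 → ℝ)
    (π1 : Θ1 → Y1 → (Θ0 × Θ2 × Y2 → ℝ)) (π2 : Θ2 → Y2 → (Θ0 × Θ1 × Y1 → ℝ))
    (s1 : Θ1 → Y1 → A1) (s2 : Θ2 → Y2 → A2) : Prop :=
  (∀ θ1 y1, s1 θ1 y1 ∈ BR1 u1 (push1 π1 s2 θ1 y1) θ1) ∧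
  (∀ θ2 y2, s2 θ2 y2 ∈ BR2 u2 (push2 π2 s1 θ2 y2) θ2)

/-- One elimination step of Δ-rationalizability for player 1 under the
informational restriction `D1`. -/
def dstep1 (u1 : A1 → A2 → Θ0 → Θ1 → Θ2 → ℝ)
    (D1 : Θ1 → Set (Θ0 × Θ2 → ℝ)) (F2 : Θ2 → Set A2) (θ1 : Θ1) : Set A1 :=
  {a1 | ∃ μ : Θ0 × Θ2 × A2 → ℝ, IsProb μ ∧
    (fun p : Θ0 × Θ2 => ∑ a2 : A2, μ (p.1, p.2, a2)) ∈ D1 θ1 ∧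
    (∀ x, μ x ≠ 0 → x.2.2 ∈ F2 x.2.1) ∧ a1 ∈ BR1 u1 μ θ1}

def dstep2 (u2 : A1 → A2 → Θ0 → Θ1 → Θ2 → ℝ)
    (D2 : Θ2 → Set (Θ0 × Θ1 → ℝ)) (F1 : Θ1 → Set A1) (θ2 : Θ2) : Set A2 :=
  {a2 | ∃ μ : Θ0 × Θ1 × A1 → ℝ, IsProb μ ∧
    (fun p : Θ0 × Θ1 => ∑ a1 : A1, μ (p.1, p.2, a1)) ∈ D2 θ2 ∧
    (∀ x, μ x ≠ 0 → x.2.2 ∈ F1 x.2.1) ∧ a2 ∈ BR2 u2 μ θ2}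

/-- The iterative Δ-rationalizability procedure. -/
def DR (u1 u2 : A1 → A2 → Θ0 → Θ1 → Θ2 → ℝ)
    (D1 : Θ1 → Set (Θ0 × Θ2 → ℝ)) (D2 : Θ2 → Set (Θ0 × Θ1 → ℝ)) :
    ℕ → (Θ1 → Set A1) × (Θ2 → Set A2)
  | 0 => (fun _ => Set.univ, fun _ => Set.univ)
  | n + 1 =>
      (fun θ1 => (DR u1 u2 D1 D2 n).1 θ1 ∩ dstep1 u1 D1 (DR u1 u2 D1 D2 n).2 θ1,
       fun θ2 => (DR u1 u2 D1 D2 n).2 θ2 ∩ dstep2 u2 D2 (DR u1 u2 D1 D2 n).1 θ2)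

def DRinf1 (u1 u2 : A1 → A2 → Θ0 → Θ1 → Θ2 → ℝ)
    (D1 : Θ1 → Set (Θ0 × Θ2 → ℝ)) (D2 : Θ2 → Set (Θ0 × Θ1 → ℝ)) (θ1 : Θ1) : Set A1 :=
  ⋂ n, (DR u1 u2 D1 D2 n).1 θ1

def DRinf2 (u1 u2 : A1 → A2 → Θ0 → Θ1 → Θ2 → ℝ)
    (D1 : Θ1 → Set (Θ0 × Θ2 → ℝ)) (D2 : Θ2 → Set (Θ0 × Θ1 → ℝ)) (θ2 : Θ2) : Set A2 :=
  ⋂ n, (DR u1 u2 D1 D2 n).2 θ2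

end Defs

section Aux

variable {Θ0 Θ1 Θ2 A1 A2 Y1 Y2 : Type}
variable [Fintype Θ0] [Fintype Θ1] [Fintype Θ2] [Fintype A1] [Fintype A2]
variable [Fintype Y1] [Fintype Y2]
variable (u1 u2 : A1 → A2 → Θ0 → Θ1 → Θ2 → ℝ)
variable (D1 : Θ1 → Set (Θ0 × Θ2 → ℝ)) (D2 : Θ2 → Set (Θ0 × Θ1 → ℝ))

lemma sum_margA1 (μ : Θ0 × Θ2 × Y2 × A2 → ℝ) :
    ∑ x : Θ0 × Θ2 × A2, margA1 μ x = ∑ z : Θ0 × Θ2 × Y2 × A2, μ z := by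
  simp only [margA1, Fintype.sum_prod_type]
  exact Finset.sum_congr rfl fun θ0 _ => Finset.sum_congr rfl fun θ2 _ => Finset.sum_comm

lemma sum_margA2 (μ : Θ0 × Θ1 × Y1 × A1 → ℝ) :
    ∑ x : Θ0 × Θ1 × A1, margA2 μ x = ∑ z : Θ0 × Θ1 × Y1 × A1, μ z := by
  simp only [margA2, Fintype.sum_prod_type]
  exact Finset.sum_congr rfl fun θ0 _ => Finset.sum_congr rfl fun θ1 _ => Finset.sum_comm

lemma DR_anti (n : ℕ) :
    (∀ θ1, (DR u1 u2 D1 D2 (n+1)).1 θ1 ⊆ (DR u1 u2 D1 D2 n).1 θ1) ∧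
    (∀ θ2, (DR u1 u2 D1 D2 (n+1)).2 θ2 ⊆ (DR u1 u2 D1 D2 n).2 θ2) :=
  ⟨fun _ => Set.inter_subset_left, fun _ => Set.inter_subset_left⟩

lemma DR_anti_le {m n : ℕ} (h : m ≤ n) :
    (∀ θ1, (DR u1 u2 D1 D2 n).1 θ1 ⊆ (DR u1 u2 D1 D2 m).1 θ1) ∧
    (∀ θ2, (DR u1 u2 D1 D2 n).2 θ2 ⊆ (DR u1 u2 D1 D2 m).2 θ2) := by
  induction n, h using Nat.le_induction with
  | base => exact ⟨fun _ => subset_rfl, fun _ => subset_rfl⟩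
  | succ n hmn ih =>
    exact ⟨fun θ1 => ((DR_anti u1 u2 D1 D2 n).1 θ1).trans (ih.1 θ1),
           fun θ2 => ((DR_anti u1 u2 D1 D2 n).2 θ2).trans (ih.2 θ2)⟩

lemma DR_stab : ∃ N : ℕ, ∀ n, N ≤ n → DR u1 u2 D1 D2 n = DR u1 u2 D1 D2 N := by
  obtain ⟨m, n, hne, heq⟩ := Finite.exists_ne_map_eq_of_infinite (DR u1 u2 D1 D2)
  wlog hmn : m < n generalizing m n
  · exact this n m hne.symm heq.symm ((hne.lt_or_gt).resolve_left hmn)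
  have hstep : DR u1 u2 D1 D2 (m+1) = DR u1 u2 D1 D2 m := by
    have h1 := DR_anti_le u1 u2 D1 D2 (show m + 1 ≤ n from hmn)
    have h2 := DR_anti u1 u2 D1 D2 m
    refine Prod.ext (funext fun θ1 => Set.Subset.antisymm (h2.1 θ1) ?_)
      (funext fun θ2 => Set.Subset.antisymm (h2.2 θ2) ?_)
    · calc (DR u1 u2 D1 D2 m).1 θ1 = (DR u1 u2 D1 D2 n).1 θ1 := by rw [heq]
        _ ⊆ (DR u1 u2 D1 D2 (m+1)).1 θ1 := h1.1 θ1
    · calc (DR u1 u2 D1 D2 m).2 θ2 = (DR u1 u2 D1 D2 n).2 θ2 := by rw [heq]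
        _ ⊆ (DR u1 u2 D1 D2 (m+1)).2 θ2 := h1.2 θ2
  have hall : ∀ k, DR u1 u2 D1 D2 (m + k) = DR u1 u2 D1 D2 m := by
    intro k
    induction k with
    | zero => rfl
    | succ k ih =>
      have : DR u1 u2 D1 D2 (m + (k+1)) =
          (fun θ1 => (DR u1 u2 D1 D2 (m+k)).1 θ1 ∩
            dstep1 u1 D1 (DR u1 u2 D1 D2 (m+k)).2 θ1,
           fun θ2 => (DR u1 u2 D1 D2 (m+k)).2 θ2 ∩
            dstep2 u2 D2 (DR u1 u2 D1 D2 (m+k)).1 θ2) := rfl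
      rw [this, ih]
      exact hstep
  refine ⟨m, fun k hk => ?_⟩
  obtain ⟨j, rfl⟩ := Nat.exists_eq_add_of_le hk
  exact hall j

lemma DRinf_fix :
    ∃ N : ℕ, DRinf1 u1 u2 D1 D2 = (DR u1 u2 D1 D2 N).1 ∧
      DRinf2 u1 u2 D1 D2 = (DR u1 u2 D1 D2 N).2 ∧
      DR u1 u2 D1 D2 (N+1) = DR u1 u2 D1 D2 N := by
  obtain ⟨N, hN⟩ := DR_stab u1 u2 D1 D2
  have key1 : DRinf1 u1 u2 D1 D2 = (DR u1 u2 D1 D2 N).1 := by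
    funext θ1
    apply Set.Subset.antisymm (Set.iInter_subset _ N)
    intro a ha
    refine Set.mem_iInter.2 fun n => ?_
    rcases le_total n N with h | h
    · exact (DR_anti_le u1 u2 D1 D2 h).1 θ1 ha
    · rw [hN n h]; exact ha
  have key2 : DRinf2 u1 u2 D1 D2 = (DR u1 u2 D1 D2 N).2 := by
    funext θ2
    apply Set.Subset.antisymm (Set.iInter_subset _ N)
    intro a ha
    refine Set.mem_iInter.2 fun n => ?_
    rcases le_total n N with h | h
    · exact (DR_anti_le u1 u2 D1 D2 h).2 θ2 ha
    · rw [hN n h]; exact ha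
  exact ⟨N, key1, key2, hN (N+1) (Nat.le_succ N)⟩

lemma DRinf_fixed1 :
    ∀ θ1 a1, a1 ∈ DRinf1 u1 u2 D1 D2 θ1 →
      a1 ∈ dstep1 u1 D1 (DRinf2 u1 u2 D1 D2) θ1 := by
  obtain ⟨N, h1, h2, h3⟩ := DRinf_fix u1 u2 D1 D2
  intro θ1 a1 ha
  rw [h1] at ha
  rw [← h3] at ha
  rw [h2]
  exact ha.2

lemma DRinf_fixed2 :
    ∀ θ2 a2, a2 ∈ DRinf2 u1 u2 D1 D2 θ2 →
      a2 ∈ dstep2 u2 D2 (DRinf1 u1 u2 D1 D2) θ2 := by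
  obtain ⟨N, h1, h2, h3⟩ := DRinf_fix u1 u2 D1 D2
  intro θ2 a2 ha
  rw [h2] at ha
  rw [← h3] at ha
  rw [h1]
  exact ha.2

lemma ICR_subset_DR
    (π1 : Θ1 → Y1 → (Θ0 × Θ2 × Y2 → ℝ)) (π2 : Θ2 → Y2 → (Θ0 × Θ1 × Y1 → ℝ))
    (hm1 : ∀ θ1 y1, (fun p : Θ0 × Θ2 => ∑ y2 : Y2, π1 θ1 y1 (p.1, p.2, y2)) ∈ D1 θ1)
    (hm2 : ∀ θ2 y2, (fun p : Θ0 × Θ1 => ∑ y1 : Y1, π2 θ2 y2 (p.1, p.2, y1)) ∈ D2 θ2) :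
    ∀ n, (∀ θ1 y1, (ICR u1 u2 π1 π2 n).1 θ1 y1 ⊆ (DR u1 u2 D1 D2 n).1 θ1) ∧
         (∀ θ2 y2, (ICR u1 u2 π1 π2 n).2 θ2 y2 ⊆ (DR u1 u2 D1 D2 n).2 θ2) := by
  intro n
  induction n with
  | zero => exact ⟨fun _ _ _ h => h, fun _ _ _ h => h⟩
  | succ n ih =>
    constructor
    · rintro θ1 y1 a1 ⟨h0, μ, hμ, hsupp, hY, hbr⟩
      refine ⟨ih.1 θ1 y1 h0, margA1 μ, ⟨fun x => Finset.sum_nonneg fun y2 _ => hμ.1 _,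
        by rw [sum_margA1]; exact hμ.2⟩, ?_, ?_, hbr⟩
      · have heq : (fun p : Θ0 × Θ2 => ∑ a2 : A2, margA1 μ (p.1, p.2, a2)) =
            (fun p : Θ0 × Θ2 => ∑ y2 : Y2, π1 θ1 y1 (p.1, p.2, y2)) := by
          funext p
          rw [← hY]
          simp only [margA1, margY1]
          exact Finset.sum_comm
        rw [heq]; exact hm1 θ1 y1
      · intro x hx
        obtain ⟨y2, _, hy2⟩ := Finset.exists_ne_zero_of_sum_ne_zero hx
        exact ih.2 x.2.1 y2 (hsupp (x.1, x.2.1, y2, x.2.2) hy2)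
    · rintro θ2 y2 a2 ⟨h0, μ, hμ, hsupp, hY, hbr⟩
      refine ⟨ih.2 θ2 y2 h0, margA2 μ, ⟨fun x => Finset.sum_nonneg fun y1 _ => hμ.1 _,
        by rw [sum_margA2]; exact hμ.2⟩, ?_, ?_, hbr⟩
      · have heq : (fun p : Θ0 × Θ1 => ∑ a1 : A1, margA2 μ (p.1, p.2, a1)) =
            (fun p : Θ0 × Θ1 => ∑ y1 : Y1, π2 θ2 y2 (p.1, p.2, y1)) := by
          funext p
          rw [← hY]
          simp only [margA2, margY2]
          exact Finset.sum_comm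
        rw [heq]; exact hm2 θ2 y2
      · intro x hx
        obtain ⟨y1, _, hy1⟩ := Finset.exists_ne_zero_of_sum_ne_zero hx
        exact ih.1 x.2.1 y1 (hsupp (x.1, x.2.1, y1, x.2.2) hy1)

lemma hard_dir [Nonempty A1] [Nonempty A2]
    (hne1 : ∀ θ1 : Θ1, (D1 θ1).Nonempty) (hne2 : ∀ θ2 : Θ2, (D2 θ2).Nonempty)
    (hsub1 : ∀ θ1 : Θ1, D1 θ1 ⊆ {p | IsProb p})
    (hsub2 : ∀ θ2 : Θ2, D2 θ2 ⊆ {p | IsProb p}) :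
    ∃ (π1 : Θ1 → A1 → (Θ0 × Θ2 × A2 → ℝ)) (π2 : Θ2 → A2 → (Θ0 × Θ1 × A1 → ℝ)),
      (∀ θ1 y1, IsProb (π1 θ1 y1)) ∧ (∀ θ2 y2, IsProb (π2 θ2 y2)) ∧
      (∀ θ1 y1, (fun p : Θ0 × Θ2 => ∑ y2 : A2, π1 θ1 y1 (p.1, p.2, y2)) ∈ D1 θ1) ∧
      (∀ θ2 y2, (fun p : Θ0 × Θ1 => ∑ y1 : A1, π2 θ2 y2 (p.1, p.2, y1)) ∈ D2 θ2) ∧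
      (∀ θ1 a1, a1 ∈ DRinf1 u1 u2 D1 D2 θ1 → a1 ∈ ICRinf1 u1 u2 π1 π2 θ1 a1) ∧
      (∀ θ2 a2, a2 ∈ DRinf2 u1 u2 D1 D2 θ2 → a2 ∈ ICRinf2 u1 u2 π1 π2 θ2 a2) := by
  classical
  have hsel1 : ∀ θ1 a1, ∃ μ : Θ0 × Θ2 × A2 → ℝ, IsProb μ ∧
      (fun p : Θ0 × Θ2 => ∑ a2 : A2, μ (p.1, p.2, a2)) ∈ D1 θ1 ∧
      (a1 ∈ DRinf1 u1 u2 D1 D2 θ1 →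
        (∀ x, μ x ≠ 0 → x.2.2 ∈ DRinf2 u1 u2 D1 D2 x.2.1) ∧ a1 ∈ BR1 u1 μ θ1) := by
    intro θ1 a1
    by_cases h : a1 ∈ DRinf1 u1 u2 D1 D2 θ1
    · obtain ⟨μ, hμ, hD, hsupp, hbr⟩ := DRinf_fixed1 u1 u2 D1 D2 θ1 a1 h
      exact ⟨μ, hμ, hD, fun _ => ⟨hsupp, hbr⟩⟩
    · obtain ⟨p, hp⟩ := hne1 θ1
      have hprob : IsProb p := hsub1 θ1 hp
      refine ⟨fun x => if x.2.2 = Classical.arbitrary A2 then p (x.1, x.2.1) else 0,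
        ⟨fun x => by dsimp only; split <;> [exact hprob.1 _; exact le_rfl], ?_⟩, ?_,
        fun h' => absurd h' h⟩
      · have := hprob.2
        simp only [Fintype.sum_prod_type] at this ⊢
        simpa using this
      · have heq : (fun q : Θ0 × Θ2 => ∑ a2 : A2,
            (fun x : Θ0 × Θ2 × A2 =>
              if x.2.2 = Classical.arbitrary A2 then p (x.1, x.2.1) else 0)
              (q.1, q.2, a2)) = p := by
          funext q
          simp
        rw [heq]; exact hp
  have hsel2 : ∀ θ2 a2, ∃ μ : Θ0 × Θ1 × A1 → ℝ, IsProb μ ∧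
      (fun p : Θ0 × Θ1 => ∑ a1 : A1, μ (p.1, p.2, a1)) ∈ D2 θ2 ∧
      (a2 ∈ DRinf2 u1 u2 D1 D2 θ2 →
        (∀ x, μ x ≠ 0 → x.2.2 ∈ DRinf1 u1 u2 D1 D2 x.2.1) ∧ a2 ∈ BR2 u2 μ θ2) := by
    intro θ2 a2
    by_cases h : a2 ∈ DRinf2 u1 u2 D1 D2 θ2
    · obtain ⟨μ, hμ, hD, hsupp, hbr⟩ := DRinf_fixed2 u1 u2 D1 D2 θ2 a2 h
      exact ⟨μ, hμ, hD, fun _ => ⟨hsupp, hbr⟩⟩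
    · obtain ⟨p, hp⟩ := hne2 θ2
      have hprob : IsProb p := hsub2 θ2 hp
      refine ⟨fun x => if x.2.2 = Classical.arbitrary A1 then p (x.1, x.2.1) else 0,
        ⟨fun x => by dsimp only; split <;> [exact hprob.1 _; exact le_rfl], ?_⟩, ?_,
        fun h' => absurd h' h⟩
      · have := hprob.2
        simp only [Fintype.sum_prod_type] at this ⊢
        simpa using this
      · have heq : (fun q : Θ0 × Θ1 => ∑ a1 : A1,
            (fun x : Θ0 × Θ1 × A1 =>
              if x.2.2 = Classical.arbitrary A1 then p (x.1, x.2.1) else 0)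
              (q.1, q.2, a1)) = p := by
          funext q
          simp
        rw [heq]; exact hp
  choose g1 hg1prob hg1D hg1main using hsel1
  choose g2 hg2prob hg2D hg2main using hsel2
  refine ⟨g1, g2, hg1prob, hg2prob, hg1D, hg2D, ?_⟩
  have main : ∀ n,
      (∀ θ1 a1, a1 ∈ DRinf1 u1 u2 D1 D2 θ1 → a1 ∈ (ICR u1 u2 g1 g2 n).1 θ1 a1) ∧
      (∀ θ2 a2, a2 ∈ DRinf2 u1 u2 D1 D2 θ2 → a2 ∈ (ICR u1 u2 g1 g2 n).2 θ2 a2) := by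
    intro n
    induction n with
    | zero => exact ⟨fun _ _ _ => Set.mem_univ _, fun _ _ _ => Set.mem_univ _⟩
    | succ n ih =>
      constructor
      · intro θ1 a1 ha
        obtain ⟨hsupp, hbr⟩ := hg1main θ1 a1 ha
        refine ⟨ih.1 θ1 a1 ha,
          fun z => if z.2.2.1 = z.2.2.2 then g1 θ1 a1 (z.1, z.2.1, z.2.2.2) else 0,
          ⟨fun z => by dsimp only; split <;> [exact (hg1prob θ1 a1).1 _; exact le_rfl], ?_⟩,
          ?_, ?_, ?_⟩
        · have := (hg1prob θ1 a1).2
          simp only [Fintype.sum_prod_type] at this ⊢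
          simpa using this
        · intro x hx
          dsimp only at hx
          by_cases hcase : x.2.2.1 = x.2.2.2
          · rw [if_pos hcase] at hx
            have := hsupp (x.1, x.2.1, x.2.2.2) hx
            have h2 := ih.2 x.2.1 x.2.2.2 this
            rw [hcase]
            exact h2
          · rw [if_neg hcase] at hx; exact absurd rfl hx
        · funext x
          obtain ⟨θ0, θ2, y2⟩ := x
          simp [margY1]
        · have heq : margA1 (fun z : Θ0 × Θ2 × A2 × A2 =>
              if z.2.2.1 = z.2.2.2 then g1 θ1 a1 (z.1, z.2.1, z.2.2.2) else 0) =
              g1 θ1 a1 := by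
            funext x
            obtain ⟨θ0, θ2, b2⟩ := x
            simp [margA1]
          rw [heq]; exact hbr
      · intro θ2 a2 ha
        obtain ⟨hsupp, hbr⟩ := hg2main θ2 a2 ha
        refine ⟨ih.2 θ2 a2 ha,
          fun z => if z.2.2.1 = z.2.2.2 then g2 θ2 a2 (z.1, z.2.1, z.2.2.2) else 0,
          ⟨fun z => by dsimp only; split <;> [exact (hg2prob θ2 a2).1 _; exact le_rfl], ?_⟩,
          ?_, ?_, ?_⟩
        · have := (hg2prob θ2 a2).2
          simp only [Fintype.sum_prod_type] at this ⊢
          simpa using this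
        · intro x hx
          dsimp only at hx
          by_cases hcase : x.2.2.1 = x.2.2.2
          · rw [if_pos hcase] at hx
            have := hsupp (x.1, x.2.1, x.2.2.2) hx
            have h1 := ih.1 x.2.1 x.2.2.2 this
            rw [hcase]
            exact h1
          · rw [if_neg hcase] at hx; exact absurd rfl hx
        · funext x
          obtain ⟨θ0, θ1', y1⟩ := x
          simp [margY2]
        · have heq : margA2 (fun z : Θ0 × Θ1 × A1 × A1 =>
              if z.2.2.1 = z.2.2.2 then g2 θ2 a2 (z.1, z.2.1, z.2.2.2) else 0) =
              g2 θ2 a2 := by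
            funext x
            obtain ⟨θ0, θ1', b1⟩ := x
            simp [margA2]
          rw [heq]; exact hbr
  exact ⟨fun θ1 a1 ha => Set.mem_iInter.2 fun n => (main n).1 θ1 a1 ha,
         fun θ2 a2 ha => Set.mem_iInter.2 fun n => (main n).2 θ2 a2 ha⟩

end Aux

theorem localized_informational_robustness {Θ0 Θ1 Θ2 A1 A2 : Type} [Fintype Θ0] [Fintype Θ1] [Fintype Θ2] [Fintype A1] [Fintype A2]
    (u1 u2 : A1 → A2 → Θ0 → Θ1 → Θ2 → ℝ)
    (D1 : Θ1 → Set (Θ0 × Θ2 → ℝ)) (D2 : Θ2 → Set (Θ0 × Θ1 → ℝ))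
    [Nonempty A1] [Nonempty A2]
    (hne1 : ∀ θ1 : Θ1, (D1 θ1).Nonempty) (hne2 : ∀ θ2 : Θ2, (D2 θ2).Nonempty)
    (hsub1 : ∀ θ1 : Θ1, D1 θ1 ⊆ {p | IsProb p})
    (hsub2 : ∀ θ2 : Θ2, D2 θ2 ⊆ {p | IsProb p}) :
    (∀ (θ1 : Θ1) (a1 : A1), a1 ∈ DRinf1 u1 u2 D1 D2 θ1 ↔
      ∃ (Y1 Y2 : Type) (_ : Fintype Y1) (_ : Fintype Y2)
        (π1 : Θ1 → Y1 → (Θ0 × Θ2 × Y2 → ℝ)) (π2 : Θ2 → Y2 → (Θ0 × Θ1 × Y1 → ℝ)),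
        (∀ θ1 y1, IsProb (π1 θ1 y1)) ∧ (∀ θ2 y2, IsProb (π2 θ2 y2)) ∧
        (∀ (θ1 : Θ1) (y1 : Y1), (fun p : Θ0 × Θ2 => ∑ y2 : Y2, π1 θ1 y1 (p.1, p.2, y2)) ∈ D1 θ1) ∧ (∀ (θ2 : Θ2) (y2 : Y2), (fun p : Θ0 × Θ1 => ∑ y1 : Y1, π2 θ2 y2 (p.1, p.2, y1)) ∈ D2 θ2) ∧
        ∃ y1 : Y1, a1 ∈ ICRinf1 u1 u2 π1 π2 θ1 y1) ∧
    (∀ (θ2 : Θ2) (a2 : A2), a2 ∈ DRinf2 u1 u2 D1 D2 θ2 ↔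
      ∃ (Y1 Y2 : Type) (_ : Fintype Y1) (_ : Fintype Y2)
        (π1 : Θ1 → Y1 → (Θ0 × Θ2 × Y2 → ℝ)) (π2 : Θ2 → Y2 → (Θ0 × Θ1 × Y1 → ℝ)),
        (∀ θ1 y1, IsProb (π1 θ1 y1)) ∧ (∀ θ2 y2, IsProb (π2 θ2 y2)) ∧
        (∀ (θ1 : Θ1) (y1 : Y1), (fun p : Θ0 × Θ2 => ∑ y2 : Y2, π1 θ1 y1 (p.1, p.2, y2)) ∈ D1 θ1) ∧ (∀ (θ2 : Θ2) (y2 : Y2), (fun p : Θ0 × Θ1 => ∑ y1 : Y1, π2 θ2 y2 (p.1, p.2, y1)) ∈ D2 θ2) ∧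
        ∃ y2 : Y2, a2 ∈ ICRinf2 u1 u2 π1 π2 θ2 y2) := by
  obtain ⟨π1, π2, hp1, hp2, hD1, hD2, hmem1, hmem2⟩ :=
    hard_dir u1 u2 D1 D2 hne1 hne2 hsub1 hsub2
  constructor
  · intro θ1 a1
    constructor
    · intro ha
      exact ⟨A1, A2, inferInstance, inferInstance, π1, π2, hp1, hp2, hD1, hD2,
        a1, hmem1 θ1 a1 ha⟩
    · rintro ⟨Y1, Y2, hY1, hY2, ρ1, ρ2, _, _, hm1, hm2, y1, hicr⟩
      refine Set.mem_iInter.2 fun n => ?_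
      exact (ICR_subset_DR u1 u2 D1 D2 ρ1 ρ2 hm1 hm2 n).1 θ1 y1 (Set.mem_iInter.1 hicr n)
  · intro θ2 a2
    constructor
    · intro ha
      exact ⟨A1, A2, inferInstance, inferInstance, π1, π2, hp1, hp2, hD1, hD2,
        a2, hmem2 θ2 a2 ha⟩
    · rintro ⟨Y1, Y2, hY1, hY2, ρ1, ρ2, _, _, hm1, hm2, y2, hicr⟩
      refine Set.mem_iInter.2 fun n => ?_
      exact (ICR_subset_DR u1 u2 D1 D2 ρ1 ρ2 hm1 hm2 n).2 θ2 y2 (Set.mem_iInter.1 hicr n)
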